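/- Let A = (a, ha+d, ha+2d, …, ha+kd) where a, h, d, k are positive integers, gcd(a, d) = 1 and 1 ≤ k ≤ a−1. Then the Sylvester number satisfies n(A) = h·(⌊(a−1)/k⌋ + 1)·(a − 1 − (k/2)·⌊(a−1)/k⌋) + (d−1)(a−1)/2. -/

import Mathlib

/-!
A combination of the generators `ha + jd` (`1 ≤ j ≤ k`) using `q` of them is `q·ha + s·d` with
`q ≤ s ≤ qk`, so for `s < a` the least representable number congruent to `s·d` mod `a` is
`w(s) = ⌈s/k⌉·ha + s·d`. As `d` is invertible mod `a`, these `w(s)` form the Apéry set of `A`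
with respect to `a`, and Selmer's formula `n(A) = Σ_{s<a} ⌊w(s)/a⌋` splits into
`h·Σ_{s<a} ⌈s/k⌉` plus `Σ_{s<a} ⌊sd/a⌋ = (a-1)(d-1)/2`; the latter by pairing `s` with `a - s`.
-/

def IsRepresentable {n : ℕ} (A : Fin n → ℕ) (m : ℕ) : Prop :=
  ∃ x : Fin n → ℕ, m = ∑ i, A i * x i

open Finset

theorem ncard_setOf_not_exists_le_modEq {a : ℕ} (ha : 0 < a) {w : ℕ → ℕ}
    (hw : Set.InjOn (fun s => w s % a) (Set.Iio a)) :
    {m | ¬ ∃ s < a, w s ≤ m ∧ m ≡ w s [MOD a]}.ncard = ∑ s ∈ range a, w s / a := by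
  have hres : (range a).image (fun s => w s % a) = range a :=
    eq_of_subset_of_card_le (fun r hr => by
        obtain ⟨s, -, rfl⟩ := mem_image.mp hr
        exact mem_range.mpr (Nat.mod_lt _ ha))
      (by rw [card_image_of_injOn (by simpa [Set.InjOn] using hw)])
  have hgaps : {m | ¬ ∃ s < a, w s ≤ m ∧ m ≡ w s [MOD a]} =
      ↑((range a).biUnion fun s => {m ∈ range (w s) | m ≡ w s [MOD a]}) := by
    ext m
    simp only [Set.mem_ofPred_eq, coe_biUnion, coe_filter, coe_range, Set.mem_Iio, mem_range,
      Set.mem_iUnion, exists_prop, not_exists, not_and]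
    constructor
    · intro hm
      obtain ⟨s, hs, hsm⟩ := mem_image.mp (hres ▸ mem_range.mpr (Nat.mod_lt m ha))
      exact ⟨s, mem_range.mp hs, not_le.mp fun h => hm s (mem_range.mp hs) h hsm.symm, hsm.symm⟩
    · rintro ⟨s, hs, hms, hmod⟩ s' hs' hle hmod'
      rw [hw hs' hs (hmod'.symm.trans hmod)] at hle
      exact hle.not_gt hms
  rw [hgaps, Set.ncard_coe_finset, card_biUnion]
  · refine sum_congr rfl fun s _ => ?_
    rw [← Nat.count_eq_card_filter_range, Nat.count_modEq_card _ ha, if_neg (lt_irrefl _),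
      add_zero]
  · intro s hs s' hs' hne
    refine disjoint_left.mpr fun m hm hm' => hne (hw (mem_range.mp hs) (mem_range.mp hs') ?_)
    exact (mem_filter.mp hm).2.symm.trans (mem_filter.mp hm').2

theorem Nat.Coprime.mul_div_add_sub_mul_div {a d s : ℕ} (had : a.Coprime d) (hs : 0 < s)
    (hsa : s < a) : s * d / a + (a - s) * d / a = d - 1 := by
  have ha : 0 < a := hs.trans hsa
  have hr : s * d % a ≠ 0 := fun h0 =>
    (Nat.not_dvd_of_pos_of_lt hs hsa) (had.dvd_of_dvd_mul_right (Nat.dvd_of_mod_eq_zero h0))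
  have htotal : s * d + (a - s) * d = a * d := by rw [← add_mul, Nat.add_sub_cancel' hsa.le]
  have hwrap : a ≤ s * d % a + (a - s) * d % a := by
    by_contra hlt
    have hzero : (s * d % a + (a - s) * d % a) % a = 0 := by
      rw [← Nat.add_mod, htotal, Nat.mul_mod_right]
    rw [Nat.mod_eq_of_lt (not_le.mp hlt)] at hzero
    exact hr (by omega)
  have := Nat.add_div_eq_of_le_mod_add_mod hwrap ha
  rw [htotal, Nat.mul_div_cancel_left d ha] at this
  exact Nat.eq_sub_of_add_eq this.symm

theorem Nat.Coprime.two_mul_sum_range_mul_div {a d : ℕ} (had : a.Coprime d) :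
    2 * ∑ s ∈ range a, s * d / a = (a - 1) * (d - 1) := by
  rcases Nat.eq_zero_or_pos a with rfl | ha
  · simp
  have hdrop : ∑ s ∈ range a, s * d / a = ∑ s ∈ Ico 1 a, s * d / a := by
    rw [range_eq_Ico, sum_eq_sum_Ico_succ_bot ha, zero_mul, Nat.zero_div, zero_add]
  have hreflect : ∑ s ∈ Ico 1 a, (a - s) * d / a = ∑ s ∈ Ico 1 a, s * d / a := by
    simpa using sum_Ico_reflect (fun s => s * d / a) 1 (m := a) (n := a) (by omega)
  rw [hdrop, two_mul]
  nth_rewrite 2 [← hreflect]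
  rw [← sum_add_distrib, sum_congr rfl fun s hs =>
    had.mul_div_add_sub_mul_div (mem_Ico.mp hs).1 (mem_Ico.mp hs).2]
  simp

theorem sum_range_succ_ceilDiv {k : ℕ} (hk : 0 < k) (n : ℕ) :
    ((∑ s ∈ range (n + 1), s ⌈/⌉ k : ℕ) : ℚ) = ((n / k : ℕ) + 1) * (n - k / 2 * (n / k : ℕ)) := by
  induction n with
  | zero => simp [Nat.ceilDiv_eq_add_pred_div, Nat.div_eq_of_lt (Nat.sub_lt hk one_pos)]
  | succ n ih =>
    have hceil : (n + 1) ⌈/⌉ k = n / k + 1 := by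
      rw [Nat.ceilDiv_eq_add_pred_div, show n + 1 + k - 1 = n + k by omega, Nat.add_div_right _ hk]
    rw [sum_range_succ, Nat.cast_add, ih, hceil, Nat.succ_div]
    split_ifs with hdvd
    · have hn : ((n + 1 : ℕ) : ℚ) = k * ((n / k : ℕ) + 1) := by
        exact_mod_cast ((Nat.succ_div_of_dvd hdvd) ▸ Nat.mul_div_cancel' hdvd).symm
      push_cast at hn ⊢
      linear_combination -hn
    · push_cast
      ring

theorem exists_sum_eq_sum_succ_mul_eq {k : ℕ} (hk : 0 < k) {q s : ℕ} (hqs : q ≤ s)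
    (hsk : s ≤ q * k) : ∃ y : Fin k → ℕ, ∑ i, y i = q ∧ ∑ i, (i.val + 1) * y i = s := by
  induction q generalizing s with
  | zero => exact ⟨0, by simp, by simp; omega⟩
  | succ q ih =>
    -- add a part `j`, as large as possible, to `q` parts summing to `s - j`
    set j := min k (s - q)
    have hj : 1 ≤ j := le_min hk (by omega)
    have hjk : j ≤ k := min_le_left _ _
    obtain ⟨y, hy, hys⟩ := ih (s := s - j) (by omega) (by
      rcases le_total k (s - q) with hkq | hqk
      · have : j = k := min_eq_left hkq
        rw [Nat.succ_mul] at hsk; omega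
      · have : j = s - q := min_eq_right hqk
        have : q ≤ q * k := Nat.le_mul_of_pos_right q hk
        omega)
    refine ⟨y + Pi.single ⟨j - 1, by omega⟩ 1, ?_, ?_⟩
    · simp [sum_add_distrib, hy]
    · simp only [Pi.add_apply, mul_add, sum_add_distrib, hys, Pi.single_apply, mul_ite, mul_one,
        mul_zero, sum_ite_eq', mem_univ, if_true]
      omega

theorem sum_le_sum_succ_mul_le {k : ℕ} (y : Fin k → ℕ) :
    ∑ i, y i ≤ ∑ i, (i.val + 1) * y i ∧ ∑ i, (i.val + 1) * y i ≤ (∑ i, y i) * k := by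
  rw [sum_mul]
  exact ⟨sum_le_sum fun i _ => Nat.le_mul_of_pos_left _ i.val.succ_pos,
    sum_le_sum fun i _ => by rw [mul_comm]; exact Nat.mul_le_mul_left _ i.isLt⟩

theorem isRepresentable_cons_iff {a b d k m : ℕ} (hk : 0 < k) :
    IsRepresentable (Fin.cons a fun i : Fin k => b + d * (i.val + 1)) m ↔
      ∃ t q s, q ≤ s ∧ s ≤ q * k ∧ m = t * a + q * b + s * d := by
  have hsum (t : ℕ) (y : Fin k → ℕ) : ∑ i, (Fin.cons a fun i : Fin k => b + d * (i.val + 1) :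
      Fin (k + 1) → ℕ) i * (Fin.cons t y : Fin (k + 1) → ℕ) i =
      t * a + (∑ i, y i) * b + (∑ i, (i.val + 1) * y i) * d := by
    rw [Fin.sum_univ_succ, sum_mul, sum_mul, add_assoc, ← sum_add_distrib, mul_comm]
    simp only [Fin.cons_zero, Fin.cons_succ]
    congr 1
    exact sum_congr rfl fun i _ => by ring
  constructor
  · rintro ⟨x, rfl⟩
    rw [← Fin.cons_self_tail x, hsum]
    exact ⟨_, _, _, (sum_le_sum_succ_mul_le _).1, (sum_le_sum_succ_mul_le _).2, rfl⟩
  · rintro ⟨t, q, s, hqs, hsk, rfl⟩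
    obtain ⟨y, rfl, rfl⟩ := exists_sum_eq_sum_succ_mul_eq hk hqs hsk
    exact ⟨Fin.cons t y, (hsum t y).symm⟩

section AlmostArithmetic

variable {a h d k : ℕ}

variable (a h d k) in
/-- For `s < a`, the least number congruent to `s * d` modulo `a` that is representable by
`(a, ha+d, …, ha+kd)`: the fewest parts from `{1, …, k}` summing to `s` is `⌈s/k⌉`. -/
def aperyElem (s : ℕ) : ℕ := s ⌈/⌉ k * (h * a) + s * d

theorem aperyElem_modEq (s : ℕ) : aperyElem a h d k s ≡ s * d [MOD a] := by
  rw [aperyElem, ← mul_assoc, mul_comm]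
  exact Nat.mul_add_mod_self_left _ _ _

theorem isRepresentable_iff_exists_aperyElem_le (ha : 0 < a) (hk : 0 < k) {m : ℕ} :
    IsRepresentable (Fin.cons a fun i : Fin k => h * a + d * (i.val + 1)) m ↔
      ∃ s < a, aperyElem a h d k s ≤ m ∧ m ≡ aperyElem a h d k s [MOD a] := by
  rw [isRepresentable_cons_iff hk]
  constructor
  · rintro ⟨t, q, s, -, hsk, rfl⟩
    refine ⟨s % a, Nat.mod_lt s ha, ?_, ?_⟩
    · have hq : (s % a) ⌈/⌉ k ≤ q :=
        (ceilDiv_le_iff_le_mul hk).2 ((Nat.mod_le s a).trans (mul_comm q k ▸ hsk))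
      have hd : s % a * d ≤ s * d := Nat.mul_le_mul_right d (Nat.mod_le s a)
      have := Nat.mul_le_mul_right (h * a) hq
      rw [aperyElem]
      omega
    · calc t * a + q * (h * a) + s * d = a * (t + q * h) + s * d := by ring
        _ ≡ s * d [MOD a] := Nat.mul_add_mod_self_left _ _ _
        _ ≡ s % a * d [MOD a] := ((Nat.mod_modEq s a).mul_right d).symm
        _ ≡ aperyElem a h d k (s % a) [MOD a] := (aperyElem_modEq _).symm
  · rintro ⟨s, -, hle, hmod⟩
    obtain ⟨t, ht⟩ := (Nat.modEq_iff_dvd' hle).mp hmod.symm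
    refine ⟨t, s ⌈/⌉ k, s, (ceilDiv_le_iff_le_mul hk).2 (Nat.le_mul_of_pos_left s hk),
      mul_comm k _ ▸ le_smul_ceilDiv hk, ?_⟩
    rw [aperyElem] at ht hle
    rw [mul_comm t a]
    omega

theorem aperyElem_div (ha : 0 < a) (s : ℕ) :
    aperyElem a h d k s / a = s ⌈/⌉ k * h + s * d / a := by
  rw [aperyElem, ← mul_assoc, mul_comm _ a, Nat.mul_add_div ha]

theorem injOn_aperyElem_mod (had : Nat.gcd a d = 1) :
    Set.InjOn (fun s => aperyElem a h d k s % a) (Set.Iio a) := fun s hs s' hs' hss' =>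
  (((aperyElem_modEq s).symm.trans (hss'.trans (aperyElem_modEq s'))).cancel_right_of_coprime
    had).eq_of_lt_of_lt hs hs'

end AlmostArithmetic

theorem stmt_18_general (a h d k : ℕ) (ha : 0 < a) (hd : 0 < d)
    (had : Nat.gcd a d = 1) (hk1 : 1 ≤ k) :
    (({m : ℕ | ¬ IsRepresentable
        (Fin.cons a (fun i : Fin k => h * a + d * (i.val + 1))) m}.ncard : ℚ)) =
      (h : ℚ) * ((((a - 1) / k : ℕ) : ℚ) + 1)
          * ((a : ℚ) - 1 - (k : ℚ) / 2 * (((a - 1) / k : ℕ) : ℚ))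
        + ((d : ℚ) - 1) * ((a : ℚ) - 1) / 2 := by
  have hgaps : {m : ℕ | ¬ IsRepresentable
      (Fin.cons a (fun i : Fin k => h * a + d * (i.val + 1))) m} =
      {m | ¬ ∃ s < a, aperyElem a h d k s ≤ m ∧ m ≡ aperyElem a h d k s [MOD a]} := by
    ext m
    rw [Set.mem_ofPred_eq, Set.mem_ofPred_eq, isRepresentable_iff_exists_aperyElem_le ha hk1]
  rw [hgaps, ncard_setOf_not_exists_le_modEq ha (injOn_aperyElem_mod had),
    sum_congr rfl fun s _ => aperyElem_div ha s, sum_add_distrib, ← sum_mul]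
  obtain ⟨n, rfl⟩ : ∃ n, a = n + 1 := ⟨a - 1, by omega⟩
  have hfloor : ((∑ s ∈ range (n + 1), s * d / (n + 1) : ℕ) : ℚ) = ((d : ℚ) - 1) * n / 2 := by
    have := congrArg (Nat.cast : ℕ → ℚ) (Nat.Coprime.two_mul_sum_range_mul_div had)
    rw [Nat.cast_mul, Nat.cast_mul, Nat.add_sub_cancel, Nat.cast_sub hd] at this
    push_cast at this ⊢
    linarith
  rw [Nat.cast_add, Nat.cast_mul, sum_range_succ_ceilDiv hk1, hfloor, Nat.add_sub_cancel]
  push_cast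
  ring

/-- For the almost arithmetic sequence `A = (a, ha+d, ha+2d, …, ha+kd)` with
`a, h, d, k ≥ 1`, `gcd(a, d) = 1` and `1 ≤ k ≤ a-1`:
`n(A) = h·(⌊(a-1)/k⌋ + 1)·(a - 1 - (k/2)·⌊(a-1)/k⌋) + (d-1)(a-1)/2`. -/
theorem stmt_18 (a h d k : ℕ) (ha : 0 < a) (hh : 0 < h) (hd : 0 < d)
    (had : Nat.gcd a d = 1) (hk1 : 1 ≤ k) (hka : k ≤ a - 1) :
    (({m : ℕ | ¬ IsRepresentable
        (Fin.cons a (fun i : Fin k => h * a + d * (i.val + 1))) m}.ncard : ℚ)) =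
      (h : ℚ) * ((((a - 1) / k : ℕ) : ℚ) + 1)
          * ((a : ℚ) - 1 - (k : ℚ) / 2 * (((a - 1) / k : ℕ) : ℚ))
        + ((d : ℚ) - 1) * ((a : ℚ) - 1) / 2 :=
  stmt_18_general a h d k ha hd had hk1
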